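/- arXiv:2601.19828 — 4 statements merged into one kernel-verified Lean document; each statement's English description precedes it below -/
import Mathlib

section
/- Let q ∈ ℕ, let Z be a real Banach space, and let a < b be real numbers with τ = b − a. Then every Z-valued polynomial w of degree at most q satisfies ‖w‖_{L^∞((a,b);Z)}² ≤ (q+1)³ · τ⁻¹ · ‖w‖_{L²((a,b);Z)}². -/
/-!
By Hahn–Banach it suffices to treat real polynomials: for `t ∈ (a, b)` pick a functional `L` of
norm at most one with `L (w t) = ‖w t‖`; then `p = L ∘ w` is a real polynomial of degree `≤ q`
with `|p| ≤ ‖w‖`.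

Expand `p (c + (d - c) x) = ∑ⱼ βⱼ Pⱼ(x)` in the shifted Legendre polynomials; by Rodrigues' formula
and repeated integration by parts they are orthogonal on `[0, 1]`, with `∫ Pⱼ² = 1 / (2j + 1)`,
and `Pⱼ(0) = 1`. Cauchy–Schwarz gives
`p(c)² = (∑ βⱼ)² ≤ (∑ (2j + 1)) ∑ βⱼ² / (2j + 1) = (q + 1)² (d - c)⁻¹ ∫_c^d p²`. Adding these
endpoint estimates on `[a, t]` and `[t, b]` yields `(b - a) p(t)² ≤ (q + 1)² ∫_a^b p²`.
-/

open MeasureTheory Set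

/-- A `Z`-valued polynomial of degree at most `q`:
`t ↦ ∑_{i=0}^{q} t^i • c i` with coefficients `c i ∈ Z`. -/
def IsPolyDegLE (Z : Type*) [AddCommGroup Z] [Module ℝ Z] (q : ℕ) (f : ℝ → Z) : Prop :=
  ∃ c : Fin (q + 1) → Z, ∀ t : ℝ, f t = ∑ i : Fin (q + 1), t ^ (i : ℕ) • c i

open Polynomial
open scoped Nat

namespace Polynomial

theorem intervalIntegrable_eval_mul_eval (f g : ℝ[X]) (a b : ℝ) :
    IntervalIntegrable (fun x => f.eval x * g.eval x) volume a b :=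
  (f.continuous.mul g.continuous).intervalIntegrable a b

theorem integral_derivative_mul_eval (f g : ℝ[X]) (a b : ℝ) :
    ∫ x in a..b, (derivative f).eval x * g.eval x =
      f.eval b * g.eval b - f.eval a * g.eval a -
        ∫ x in a..b, f.eval x * (derivative g).eval x := by
  rw [eq_sub_iff_add_eq, ← intervalIntegral.integral_add (intervalIntegrable_eval_mul_eval ..)
    (intervalIntegrable_eval_mul_eval ..)]
  exact intervalIntegral.integral_deriv_mul_eq_sub (fun x _ => f.hasDerivAt x)
    (fun x _ => g.hasDerivAt x) ((derivative f).continuous.intervalIntegrable a b)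
    ((derivative g).continuous.intervalIntegrable a b)

theorem integral_iterate_derivative_mul_eval {f : ℝ[X]} {a b : ℝ} {n : ℕ}
    (ha : ∀ k < n, (derivative^[k] f).eval a = 0) (hb : ∀ k < n, (derivative^[k] f).eval b = 0)
    (g : ℝ[X]) :
    ∫ x in a..b, (derivative^[n] f).eval x * g.eval x =
      (-1) ^ n * ∫ x in a..b, f.eval x * (derivative^[n] g).eval x := by
  induction n generalizing g with
  | zero => simp
  | succ n ih =>
    rw [Function.iterate_succ_apply', integral_derivative_mul_eval, ha n n.lt_succ_self,
      hb n n.lt_succ_self, ih (fun k hk => ha k (hk.trans n.lt_succ_self))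
        (fun k hk => hb k (hk.trans n.lt_succ_self)), Function.iterate_succ_apply]
    ring

theorem iterate_derivative_of_natDegree_le {R : Type*} [Semiring R] {p : R[X]} {n : ℕ}
    (hp : p.natDegree ≤ n) : derivative^[n] p = C (n ! * p.coeff n) := by
  rw [eq_C_of_natDegree_le_zero ((natDegree_iterate_derivative p n).trans (by omega)),
    coeff_iterate_derivative, zero_add, Nat.descFactorial_self, nsmul_eq_mul]

end Polynomial

theorem integral_pow_mul_one_sub_pow (m n : ℕ) :
    ∫ x in (0 : ℝ)..1, x ^ m * (1 - x) ^ n = (m ! * n ! : ℝ) / (m + n + 1) ! := by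
  induction n generalizing m with
  | zero =>
    simp [integral_pow, Nat.factorial_succ, div_mul_cancel_right₀, Nat.factorial_ne_zero]
  | succ n ih =>
    have hparts : ((m : ℝ) + 1) * ∫ x in (0 : ℝ)..1, x ^ m * (1 - x) ^ (n + 1) =
        ((n : ℝ) + 1) * ∫ x in (0 : ℝ)..1, x ^ (m + 1) * (1 - x) ^ n := by
      have hibp := integral_derivative_mul_eval (X ^ (m + 1)) ((1 - X) ^ (n + 1)) 0 1
      rw [← intervalIntegral.integral_const_mul, ← intervalIntegral.integral_const_mul]
      simpa [derivative_pow, mul_assoc, mul_left_comm] using hibp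
    rw [ih, show m + 1 + n + 1 = m + (n + 1) + 1 by ring] at hparts
    rw [← mul_right_inj' (show (m : ℝ) + 1 ≠ 0 by positivity), hparts]
    push_cast [Nat.factorial_succ]
    field_simp

theorem sum_range_two_mul_add_one (n : ℕ) :
    ∑ j ∈ Finset.range n, (2 * (j : ℝ) + 1) = n ^ 2 := by
  induction n with
  | zero => simp
  | succ n ih =>
    rw [Finset.sum_range_succ, ih]
    push_cast
    ring

namespace Polynomial

noncomputable def shiftedLegendreReal (n : ℕ) : ℝ[X] :=
  (shiftedLegendre n).map (Int.castRingHom ℝ)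

theorem coeff_shiftedLegendreReal (n k : ℕ) :
    (shiftedLegendreReal n).coeff k = (-1) ^ k * n.choose k * (n + k).choose n := by
  simp [shiftedLegendreReal, coeff_shiftedLegendre]

theorem degree_shiftedLegendreReal (n : ℕ) : (shiftedLegendreReal n).degree = n := by
  rw [shiftedLegendreReal, degree_map_eq_of_injective (RingHom.injective_int _),
    degree_shiftedLegendre]

@[simp]
theorem natDegree_shiftedLegendreReal (n : ℕ) : (shiftedLegendreReal n).natDegree = n :=
  natDegree_eq_of_degree_eq_some (degree_shiftedLegendreReal n)

theorem eval_zero_shiftedLegendreReal (n : ℕ) : (shiftedLegendreReal n).eval 0 = 1 := by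
  simp [← coeff_zero_eq_eval_zero, coeff_shiftedLegendreReal]

theorem factorial_mul_shiftedLegendreReal (n : ℕ) :
    (n ! : ℝ[X]) * shiftedLegendreReal n = derivative^[n] ((X * (1 - X)) ^ n) := by
  simpa [shiftedLegendreReal, ← iterate_derivative_map, mul_pow] using
    congrArg (map (Int.castRingHom ℝ)) (factorial_mul_shiftedLegendre_eq n)

theorem eval_iterate_derivative_X_mul_one_sub_X_pow {n k : ℕ} (hk : k < n) {x : ℝ}
    (hx : x = 0 ∨ x = 1) : (derivative^[k] ((X * (1 - X)) ^ n)).eval x = 0 := by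
  refine eval_eq_zero_of_dvd_of_eval_eq_zero (pow_sub_dvd_iterate_derivative_pow _ n k) ?_
  rcases hx with rfl | rfl <;> simp [Nat.sub_ne_zero_of_lt hk]

theorem factorial_mul_integral_shiftedLegendreReal_mul (n : ℕ) (g : ℝ[X]) :
    n ! * ∫ x in (0 : ℝ)..1, (shiftedLegendreReal n).eval x * g.eval x =
      (-1) ^ n * ∫ x in (0 : ℝ)..1, (x * (1 - x)) ^ n * (derivative^[n] g).eval x := by
  have h := integral_iterate_derivative_mul_eval
    (fun k hk => eval_iterate_derivative_X_mul_one_sub_X_pow (n := n) hk (Or.inl rfl))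
    (fun k hk => eval_iterate_derivative_X_mul_one_sub_X_pow (n := n) hk (Or.inr rfl)) g
  rw [← factorial_mul_shiftedLegendreReal] at h
  simpa [← intervalIntegral.integral_const_mul, mul_assoc] using h

theorem integral_shiftedLegendreReal_mul_eq_zero {n : ℕ} {g : ℝ[X]} (hg : g.natDegree < n) :
    ∫ x in (0 : ℝ)..1, (shiftedLegendreReal n).eval x * g.eval x = 0 := by
  have h := factorial_mul_integral_shiftedLegendreReal_mul n g
  rw [iterate_derivative_eq_zero hg] at h
  simpa [Nat.factorial_ne_zero] using h

theorem integral_shiftedLegendreReal_mul_self (n : ℕ) :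
    ∫ x in (0 : ℝ)..1, (shiftedLegendreReal n).eval x * (shiftedLegendreReal n).eval x =
      1 / (2 * n + 1) := by
  -- `Dⁿ Pₙ` is the constant `n! (-1)ⁿ (2n choose n)`,
  -- and `(2n choose n) ∫ xⁿ (1 - x)ⁿ = 1 / (2n + 1)`.
  have h := factorial_mul_integral_shiftedLegendreReal_mul n (shiftedLegendreReal n)
  rw [iterate_derivative_of_natDegree_le (natDegree_shiftedLegendreReal n).le,
    coeff_shiftedLegendreReal] at h
  simp only [eval_C, mul_pow, intervalIntegral.integral_mul_const,
    integral_pow_mul_one_sub_pow] at h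
  have hsign : ((-1 : ℝ) ^ n) * (-1) ^ n = 1 := by rw [← mul_pow]; simp
  have hbeta : (n ! * n ! / (n + n + 1) ! * (n ! * (n + n).choose n) : ℝ) =
      n ! * (1 / (2 * n + 1)) := by
    have hc : ((n + n).choose n : ℝ) ≠ 0 := by exact_mod_cast (Nat.choose_pos (by omega)).ne'
    rw [Nat.factorial_succ, ← Nat.add_choose_mul_factorial_mul_factorial n n]
    push_cast
    field_simp
    ring
  rw [← mul_right_inj' (show (n ! : ℝ) ≠ 0 by positivity), h, Nat.choose_self, Nat.cast_one]
  linear_combination (n ! * n ! / (n + n + 1) ! * (n ! * (n + n).choose n) : ℝ) * hsign + hbeta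

theorem integral_shiftedLegendreReal_mul_of_ne {m n : ℕ} (h : m ≠ n) :
    ∫ x in (0 : ℝ)..1, (shiftedLegendreReal m).eval x * (shiftedLegendreReal n).eval x = 0 := by
  rcases h.lt_or_gt with h | h
  · simp_rw [mul_comm ((shiftedLegendreReal m).eval _)]
    exact integral_shiftedLegendreReal_mul_eq_zero (by simpa using h)
  · exact integral_shiftedLegendreReal_mul_eq_zero (by simpa using h)

theorem integral_sum_shiftedLegendreReal_sq (s : Finset ℕ) (c : ℕ → ℝ) :
    ∫ x in (0 : ℝ)..1, (∑ j ∈ s, c j • shiftedLegendreReal j).eval x ^ 2 =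
      ∑ j ∈ s, c j ^ 2 / (2 * j + 1) := by
  simp_rw [eval_finsetSum, eval_smul, smul_eq_mul, sq, Finset.sum_mul_sum, mul_mul_mul_comm]
  rw [intervalIntegral.integral_finsetSum fun i _ => Continuous.intervalIntegrable (by fun_prop) ..]
  refine Finset.sum_congr rfl fun i hi => ?_
  rw [intervalIntegral.integral_finsetSum fun j _ => Continuous.intervalIntegrable (by fun_prop) ..,
    Finset.sum_eq_single i]
  · rw [intervalIntegral.integral_const_mul, integral_shiftedLegendreReal_mul_self]
    ring
  · intro j _ hji
    rw [intervalIntegral.integral_const_mul, integral_shiftedLegendreReal_mul_of_ne hji.symm,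
      mul_zero]
  · exact fun h => (h hi).elim

theorem exists_eq_sum_smul_shiftedLegendreReal {p : ℝ[X]} {q : ℕ} (hp : p.natDegree ≤ q) :
    ∃ c : ℕ → ℝ, ∑ j ∈ Finset.range (q + 1), c j • shiftedLegendreReal j = p := by
  let S : Sequence ℝ := ⟨shiftedLegendreReal, degree_shiftedLegendreReal⟩
  have hspan : p ∈ Submodule.span ℝ (S '' Finset.range (q + 1)) := by
    rw [Finset.coe_range,
      S.span_degreeLT fun i _ => (leadingCoeff_ne_zero.2 (S.ne_zero i)).isUnit, mem_degreeLT]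
    exact (degree_le_natDegree.trans (WithBot.coe_le_coe.2 hp)).trans_lt
      (WithBot.coe_lt_coe.2 q.lt_succ_self)
  exact (Submodule.mem_span_image_finset_iff_exists_fun' ℝ).1 hspan

theorem sq_eval_zero_le_integral_sq {p : ℝ[X]} {q : ℕ} (hp : p.natDegree ≤ q) :
    p.eval 0 ^ 2 ≤ (q + 1) ^ 2 * ∫ x in (0 : ℝ)..1, p.eval x ^ 2 := by
  obtain ⟨c, rfl⟩ := exists_eq_sum_smul_shiftedLegendreReal hp
  have h := Finset.sq_sum_div_le_sum_sq_div (Finset.range (q + 1)) c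
    (g := fun j => 2 * (j : ℝ) + 1) fun j _ => by positivity
  rw [sum_range_two_mul_add_one, div_le_iff₀ (by positivity)] at h
  rw [integral_sum_shiftedLegendreReal_sq]
  simpa [eval_finsetSum, eval_zero_shiftedLegendreReal, mul_comm] using h

theorem sq_eval_le_mul_inv_mul_integral_sq {p : ℝ[X]} {q : ℕ} (hp : p.natDegree ≤ q)
    {c d : ℝ} (hcd : c ≠ d) :
    p.eval c ^ 2 ≤ (q + 1) ^ 2 * ((d - c)⁻¹ * ∫ x in c..d, p.eval x ^ 2) := by
  have hr : (p.comp (C (d - c) * X + C c)).natDegree ≤ q :=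
    natDegree_comp_le.trans ((Nat.mul_le_mul hp natDegree_linear_le).trans_eq (mul_one q))
  have h := sq_eval_zero_le_integral_sq hr
  simp only [eval_comp, eval_add, eval_mul, eval_C, eval_X, mul_zero, zero_add] at h
  rwa [intervalIntegral.integral_comp_mul_add (fun x => p.eval x ^ 2) (sub_ne_zero.2 hcd.symm),
    mul_zero, zero_add, mul_one, sub_add_cancel, smul_eq_mul] at h

theorem mul_sq_eval_le_integral_sq {p : ℝ[X]} {q : ℕ} (hp : p.natDegree ≤ q) {a b t : ℝ}
    (ht : t ∈ Ioo a b) :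
    (b - a) * p.eval t ^ 2 ≤ (q + 1) ^ 2 * ∫ x in a..b, p.eval x ^ 2 := by
  have hleft := sq_eval_le_mul_inv_mul_integral_sq hp ht.1.ne'
  rw [intervalIntegral.integral_symm, mul_neg, ← neg_mul, ← inv_neg, neg_sub,
    ← div_eq_inv_mul, mul_div_assoc', le_div_iff₀ (sub_pos.2 ht.1)] at hleft
  have hright := sq_eval_le_mul_inv_mul_integral_sq hp ht.2.ne
  rw [← div_eq_inv_mul, mul_div_assoc', le_div_iff₀ (sub_pos.2 ht.2)] at hright
  have hint (u v : ℝ) : IntervalIntegrable (fun x => p.eval x ^ 2) volume u v :=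
    Continuous.intervalIntegrable (by fun_prop) u v
  rw [← intervalIntegral.integral_add_adjacent_intervals (hint a t) (hint t b)]
  linear_combination hleft + hright

end Polynomial

section LpNorms

variable {α E : Type*} [MeasurableSpace α] {μ : Measure α} [NormedAddCommGroup E]

theorem eLpNorm_top_sq_le_of_ae_norm_sq_le {f : α → E} {C : ℝ}
    (h : ∀ᵐ x ∂μ, ‖f x‖ ^ 2 ≤ C) : eLpNorm f ⊤ μ ^ 2 ≤ ENNReal.ofReal C := by
  have hsqrt : eLpNorm f ⊤ μ ≤ ENNReal.ofReal √C := by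
    rw [eLpNorm_exponent_top]
    exact eLpNormEssSup_le_of_ae_bound
      (h.mono fun x hx => (Real.abs_le_sqrt hx).trans' (le_abs_self _))
  calc eLpNorm f ⊤ μ ^ 2 ≤ ENNReal.ofReal √C ^ 2 := pow_le_pow_left' hsqrt 2
    _ = ENNReal.ofReal (max C 0) := by
      rw [← ENNReal.ofReal_pow (Real.sqrt_nonneg C), Real.sq_sqrt']
    _ = ENNReal.ofReal C := by simp

theorem MeasureTheory.MemLp.eLpNorm_two_sq_eq {f : α → E} (hf : MemLp f 2 μ) :
    eLpNorm f 2 μ ^ 2 = ENNReal.ofReal (∫ x, ‖f x‖ ^ 2 ∂μ) := by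
  rw [hf.eLpNorm_eq_integral_rpow_norm two_ne_zero ENNReal.ofNat_ne_top,
    ← ENNReal.ofReal_pow (by positivity)]
  simp only [ENNReal.toReal_ofNat, Real.rpow_two]
  rw [← one_div, ← Real.sqrt_eq_rpow, Real.sq_sqrt (integral_nonneg fun x => by positivity)]

theorem Continuous.eLpNorm_two_restrict_Ioo_sq_eq {f : ℝ → E} (hf : Continuous f) {a b : ℝ}
    (hab : a ≤ b) : eLpNorm f 2 (volume.restrict (Ioo a b)) ^ 2 =
      ENNReal.ofReal (∫ x in a..b, ‖f x‖ ^ 2) := by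
  have hint : IntegrableOn (fun x => ‖f x‖ ^ 2) (Ioo a b) :=
    (Continuous.integrableOn_Icc (by fun_prop)).mono_set Ioo_subset_Icc_self
  rw [((memLp_two_iff_integrable_sq_norm hf.aestronglyMeasurable).2 hint).eLpNorm_two_sq_eq,
    intervalIntegral.integral_of_le hab, integral_Ioc_eq_integral_Ioo]

end LpNorms

namespace IsPolyDegLE

theorem continuous {Z : Type*} [NormedAddCommGroup Z] [NormedSpace ℝ Z] {q : ℕ} {w : ℝ → Z}
    (hw : IsPolyDegLE Z q w) : Continuous w := by
  obtain ⟨c, hc⟩ := hw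
  rw [funext hc]
  fun_prop

theorem exists_natDegree_le_comp {Z : Type*} [AddCommGroup Z] [Module ℝ Z] {q : ℕ}
    {w : ℝ → Z} (hw : IsPolyDegLE Z q w) (L : Z →ₗ[ℝ] ℝ) :
    ∃ p : ℝ[X], p.natDegree ≤ q ∧ ∀ t, L (w t) = p.eval t := by
  obtain ⟨c, hc⟩ := hw
  refine ⟨∑ i : Fin (q + 1), C (L (c i)) * X ^ (i : ℕ), natDegree_sum_le_of_forall_le _ _
    fun i _ => (natDegree_C_mul_X_pow_le _ _).trans (Nat.lt_succ_iff.1 i.isLt), fun t => ?_⟩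
  simp [hc, eval_finsetSum, mul_comm (t ^ _)]

theorem mul_norm_sq_le_integral_norm_sq {Z : Type*} [NormedAddCommGroup Z] [NormedSpace ℝ Z]
    {q : ℕ} {w : ℝ → Z} (hw : IsPolyDegLE Z q w) {a b t : ℝ} (ht : t ∈ Ioo a b) :
    (b - a) * ‖w t‖ ^ 2 ≤ (q + 1) ^ 2 * ∫ x in a..b, ‖w x‖ ^ 2 := by
  obtain ⟨L, hL, hLt⟩ := exists_dual_vector'' ℝ (w t)
  obtain ⟨p, hp, hLp⟩ := hw.exists_natDegree_le_comp L.toLinearMap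
  have hpw (x : ℝ) : p.eval x ^ 2 ≤ ‖w x‖ ^ 2 := by
    rw [← sq_abs, ← hLp]
    gcongr
    exact (L.le_opNorm (w x)).trans (mul_le_of_le_one_left (norm_nonneg _) hL)
  calc (b - a) * ‖w t‖ ^ 2 = (b - a) * p.eval t ^ 2 := by
        rw [← hLp]
        simp [hLt]
    _ ≤ (q + 1) ^ 2 * ∫ x in a..b, p.eval x ^ 2 := mul_sq_eval_le_integral_sq hp ht
    _ ≤ (q + 1) ^ 2 * ∫ x in a..b, ‖w x‖ ^ 2 := by
        gcongr
        exact intervalIntegral.integral_mono (ht.1.trans ht.2).le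
          (Continuous.intervalIntegrable (by fun_prop) _ _)
          (Continuous.intervalIntegrable (hw.continuous.norm.pow 2) _ _) hpw

end IsPolyDegLE

theorem inverse_estimate_general (q : ℕ) (Z : Type*) [NormedAddCommGroup Z] [NormedSpace ℝ Z]
    (a b τ : ℝ) (hab : a < b) (hτ : τ = b - a)
    (w : ℝ → Z) (hw : IsPolyDegLE Z q w) :
    (eLpNorm w ⊤ (volume.restrict (Ioo a b))) ^ 2 ≤
      ENNReal.ofReal (((q : ℝ) + 1) ^ 3 * τ⁻¹) *
        (eLpNorm w 2 (volume.restrict (Ioo a b))) ^ 2 := by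
  subst hτ
  have hba : 0 < b - a := sub_pos.2 hab
  set S := ∫ x in a..b, ‖w x‖ ^ 2
  have hS : 0 ≤ S := intervalIntegral.integral_nonneg hab.le fun x _ => by positivity
  have hbound : ∀ t ∈ Ioo a b, ‖w t‖ ^ 2 ≤ ((q : ℝ) + 1) ^ 3 * (b - a)⁻¹ * S := by
    intro t ht
    have h := hw.mul_norm_sq_le_integral_norm_sq ht
    rw [← le_div_iff₀' hba] at h
    calc ‖w t‖ ^ 2 ≤ ((q : ℝ) + 1) ^ 2 * (b - a)⁻¹ * S := by
          rwa [mul_right_comm, ← div_eq_mul_inv]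
      _ ≤ ((q : ℝ) + 1) ^ 3 * (b - a)⁻¹ * S := by
        gcongr
        · exact le_add_of_nonneg_left q.cast_nonneg
        · norm_num
  rw [hw.continuous.eLpNorm_two_restrict_Ioo_sq_eq hab.le, ← ENNReal.ofReal_mul (by positivity)]
  exact eLpNorm_top_sq_le_of_ae_norm_sq_le (ae_restrict_of_forall_mem measurableSet_Ioo hbound)

/-- **Polynomial inverse estimate.** For every `Z`-valued polynomial `w` of degree at most `q`,
`‖w‖_{L^∞((a,b);Z)}² ≤ (q+1)³ τ⁻¹ ‖w‖_{L²((a,b);Z)}²` with `τ = b - a`. -/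
theorem inverse_estimate (q : ℕ) (Z : Type*) [NormedAddCommGroup Z] [NormedSpace ℝ Z]
    [CompleteSpace Z] (a b τ : ℝ) (hab : a < b) (hτ : τ = b - a)
    (w : ℝ → Z) (hw : IsPolyDegLE Z q w) :
    (eLpNorm w ⊤ (volume.restrict (Ioo a b))) ^ 2 ≤
      ENNReal.ofReal (((q : ℝ) + 1) ^ 3 * τ⁻¹) *
        (eLpNorm w 2 (volume.restrict (Ioo a b))) ^ 2 :=
  inverse_estimate_general q Z a b τ hab hτ w hw
end

section
/- Let q ∈ ℕ, let s be an integer with 1 ≤ s ≤ q + 1, let C_P > 0, and let Z be a real Banach space. There exists a constant C > 0, depending only on q, s, and C_P, with the following property: for all real numbers a < b with τ = b − a, all r ∈ [1,∞], every linear operator P from C([a,b];Z) into the space of restrictions to [a,b] of Z-valued polynomials of degree at most q satisfying (i) Pp = p on [a,b] for every Z-valued polynomial p of degree at most q, and (ii) ‖Pg‖_{L^∞((a,b);Z)} ≤ C_P ‖g‖_{L^∞((a,b);Z)} for every g ∈ C([a,b];Z), and every s-times continuously differentiable function v : [a,b] → Z, one has ‖v − Pv‖_{L^r((a,b);Z)}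 ≤ C τ^s ‖v^{(s)}‖_{L^r((a,b);Z)}. -/
open MeasureTheory Set ENNReal

open Polynomial
open scoped Nat

section Polynomials

variable {Z : Type*} [AddCommGroup Z] [Module ℝ Z] {q : ℕ}

theorem IsPolyDegLE.continuous_s4 [TopologicalSpace Z] [IsTopologicalAddGroup Z]
    [ContinuousSMul ℝ Z] {f : ℝ → Z} (hf : IsPolyDegLE Z q f) : Continuous f := by
  obtain ⟨c, hc⟩ := hf
  rw [funext hc]
  fun_prop

theorem isPolyDegLE_eval_smul (p : ℝ[X]) (hp : p.natDegree ≤ q) (c : Z) :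
    IsPolyDegLE Z q fun t => p.eval t • c := by
  refine ⟨fun i => p.coeff i • c, fun t => ?_⟩
  show p.eval t • c = _
  rw [eval_eq_sum_range' (Nat.lt_succ_of_le hp), Finset.sum_smul,
    ← Fin.sum_univ_eq_sum_range]
  simp only [smul_smul, mul_comm]

theorem IsPolyDegLE.sum {ι : Type*} (s : Finset ι) {f : ι → ℝ → Z}
    (hf : ∀ i ∈ s, IsPolyDegLE Z q (f i)) : IsPolyDegLE Z q fun t => ∑ i ∈ s, f i t := by
  choose c hc using hf
  refine ⟨fun j => ∑ i ∈ s.attach, c i.1 i.2 j, fun t => ?_⟩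
  simp only [Finset.smul_sum]
  rw [Finset.sum_comm, ← Finset.sum_attach s]
  exact Finset.sum_congr rfl fun i _ => hc i.1 i.2 t

end Polynomials

section Taylor

variable {E : Type*} [NormedAddCommGroup E] [NormedSpace ℝ E]

theorem isPolyDegLE_taylorWithinEval {n q : ℕ} (hn : n ≤ q) (f : ℝ → E) (s : Set ℝ) (x₀ : ℝ) :
    IsPolyDegLE E q (taylorWithinEval f n s x₀) := by
  have hpoly := IsPolyDegLE.sum (Finset.range (n + 1)) fun k hk =>
    isPolyDegLE_eval_smul (q := q) (C (k ! : ℝ)⁻¹ * (X - C x₀) ^ k)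
      ((natDegree_C_mul_le _ _).trans <|
        (natDegree_pow_le_of_le k (natDegree_X_sub_C_le x₀)).trans <|
          by simpa using (Finset.mem_range_succ_iff.mp hk).trans hn)
      (iteratedDerivWithin k f s x₀)
  convert hpoly using 2 with x
  simp [taylor_within_apply]

theorem enorm_sub_le_lintegral_of_hasDerivWithinAt {g g' : ℝ → E} {a b : ℝ} (hab : a < b)
    (hg : ∀ t ∈ Icc a b, HasDerivWithinAt g (g' t) (Icc a b) t) (hg' : ContinuousOn g' (Icc a b)) :
    ‖g b - g a‖ₑ ≤ ∫⁻ t in Icc a b, ‖g' t‖ₑ := by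
  have hderiv : EqOn (derivWithin g (Icc a b)) g' (Icc a b) := fun t ht =>
    (hg t ht).derivWithin (uniqueDiffOn_Icc hab t ht)
  have hC1 : ContDiffOn ℝ 1 g (Icc a b) := by
    rw [← zero_add 1, contDiffOn_succ_iff_derivWithin (uniqueDiffOn_Icc hab)]
    exact ⟨fun t ht => (hg t ht).differentiableWithinAt, by simp,
      contDiffOn_zero.mpr (hg'.congr hderiv)⟩
  calc ‖g b - g a‖ₑ ≤ ∫⁻ t in Icc a b, ‖derivWithin g (Icc a b) t‖ₑ :=
        enorm_sub_le_lintegral_derivWithin_Icc_of_contDiffOn_Icc hC1 hab.le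
    _ = ∫⁻ t in Icc a b, ‖g' t‖ₑ := setLIntegral_congr_fun measurableSet_Icc fun t ht => by
        rw [hderiv ht]

theorem enorm_sub_taylorWithinEval_le {f : ℝ → E} {a b x : ℝ} {n : ℕ} (hab : a < b)
    (hf : ContDiffOn ℝ (n + 1) f (Icc a b)) (hx : x ∈ Icc a b) :
    ‖f x - taylorWithinEval f n (Icc a b) a x‖ₑ ≤
      ENNReal.ofReal ((b - a) ^ n / n !) *
        ∫⁻ t in Icc a b, ‖iteratedDerivWithin (n + 1) f (Icc a b) t‖ₑ := by
  rcases hx.1.eq_or_lt with rfl | hax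
  · simp
  set D := iteratedDerivWithin (n + 1) f (Icc a b)
  have hsub : Icc a x ⊆ Icc a b := Icc_subset_Icc_right hx.2
  have hf' : DifferentiableOn ℝ (iteratedDerivWithin n f (Icc a b)) (Icc a b) :=
    hf.differentiableOn_iteratedDerivWithin (mod_cast n.lt_succ_self) (uniqueDiffOn_Icc hab)
  have hD : ContinuousOn D (Icc a b) :=
    hf.continuousOn_iteratedDerivWithin le_rfl (uniqueDiffOn_Icc hab)
  -- the Taylor polynomial, as a function of its base point, runs from `T_a f (x)` to `f x`
  have hremainder := enorm_sub_le_lintegral_of_hasDerivWithinAt hax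
    (fun t ht => (hasDerivWithinAt_taylorWithinEval_at_Icc x hab (hsub ht) hf.of_succ hf').mono
      hsub)
    ((Continuous.continuousOn (by fun_prop)).smul (hD.mono hsub))
  rw [taylorWithinEval_self] at hremainder
  have hkernel : ∀ t ∈ Icc a x, ‖((n ! : ℝ)⁻¹ * (x - t) ^ n) • D t‖ₑ ≤
      ENNReal.ofReal ((b - a) ^ n / n !) * ‖D t‖ₑ := fun t ht => by
    rw [enorm_smul, Real.enorm_eq_ofReal_abs]
    gcongr
    rw [abs_mul, abs_pow, abs_inv, Nat.abs_cast, abs_of_nonneg (sub_nonneg.mpr ht.2),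
      div_eq_inv_mul]
    gcongr <;> linarith [ht.1, ht.2, hx.2]
  calc ‖f x - taylorWithinEval f n (Icc a b) a x‖ₑ
      ≤ ∫⁻ t in Icc a x, ‖((n ! : ℝ)⁻¹ * (x - t) ^ n) • D t‖ₑ := hremainder
    _ ≤ ∫⁻ t in Icc a x, ENNReal.ofReal ((b - a) ^ n / n !) * ‖D t‖ₑ :=
        setLIntegral_mono' measurableSet_Icc hkernel
    _ = ENNReal.ofReal ((b - a) ^ n / n !) * ∫⁻ t in Icc a x, ‖D t‖ₑ :=
        lintegral_const_mul' _ _ ofReal_ne_top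
    _ ≤ ENNReal.ofReal ((b - a) ^ n / n !) * ∫⁻ t in Icc a b, ‖D t‖ₑ := by
        gcongr

end Taylor

section Lebesgue

variable {α E F : Type*} [MeasurableSpace α] {μ : Measure α}
  [NormedAddCommGroup E] [NormedAddCommGroup F]

theorem ae_enorm_sub_le_of_eLpNorm_top_le {f g : α → E} {M K : ℝ≥0∞}
    (hf : ∀ᵐ x ∂μ, ‖f x‖ₑ ≤ M) (hg : eLpNorm g ⊤ μ ≤ K * eLpNorm f ⊤ μ) :
    ∀ᵐ x ∂μ, ‖f x - g x‖ₑ ≤ (1 + K) * M := by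
  have hfM : eLpNorm f ⊤ μ ≤ M := by
    rw [eLpNorm_exponent_top]
    exact eLpNormEssSup_le_of_ae_enorm_bound hf
  have hgM : eLpNormEssSup g μ ≤ K * M := by
    rw [← eLpNorm_exponent_top]
    exact hg.trans (by gcongr)
  filter_upwards [hf, enorm_ae_le_eLpNormEssSup g μ] with x hfx hgx
  calc ‖f x - g x‖ₑ ≤ ‖f x‖ₑ + ‖g x‖ₑ := enorm_sub_le
    _ ≤ M + K * M := add_le_add hfx (hgx.trans hgM)
    _ = (1 + K) * M := by ring

theorem eLpNorm_le_mul_measure_univ_mul_of_ae_enorm_le {f : α → E} {g : α → F} {K : ℝ≥0∞}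
    {r : ℝ≥0∞} [IsFiniteMeasure μ] (hr : 1 ≤ r) (hf : AEStronglyMeasurable f μ)
    (hg : ∀ᵐ x ∂μ, ‖g x‖ₑ ≤ K * eLpNorm f 1 μ) :
    eLpNorm g r μ ≤ K * μ univ * eLpNorm f r μ := by
  rcases eq_zero_or_neZero μ with rfl | hμ
  · simp
  have hμ0 : μ univ ≠ 0 := Measure.measure_univ_ne_zero.mpr (NeZero.ne μ)
  have hholder := eLpNorm_le_eLpNorm_mul_rpow_measure_univ hr hf
  calc eLpNorm g r μ ≤ K * eLpNorm f 1 μ * μ univ ^ r.toReal⁻¹ := by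
        simpa using eLpNorm_le_of_ae_enorm_bound (p := r) hg
    _ ≤ K * (eLpNorm f r μ * μ univ ^ (1 - 1 / r.toReal)) * μ univ ^ r.toReal⁻¹ := by
        gcongr
        simpa using hholder
    _ = K * eLpNorm f r μ * (μ univ ^ (1 - 1 / r.toReal) * μ univ ^ (1 / r.toReal)) := by
        rw [one_div]; ring
    _ = K * μ univ * eLpNorm f r μ := by
        rw [← ENNReal.rpow_add _ _ hμ0 (measure_ne_top μ univ), sub_add_cancel, rpow_one]
        ring

end Lebesgue

theorem one_add_ofReal_mul_ofReal_div_factorial_mul_le {c τ : ℝ} (hc : 0 ≤ c) (hτ : 0 ≤ τ)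
    (n : ℕ) :
    (1 + ENNReal.ofReal c) * ENNReal.ofReal (τ ^ n / n !) * ENNReal.ofReal τ ≤
      ENNReal.ofReal ((1 + c) * τ ^ (n + 1)) := by
  rw [← ofReal_one, ← ofReal_add zero_le_one hc, ← ofReal_mul (by positivity),
    ← ofReal_mul (by positivity)]
  apply ofReal_le_ofReal
  rw [pow_succ, ← mul_assoc]
  gcongr
  exact div_le_self (by positivity) (mod_cast n.factorial_pos)

theorem sub_apply_eq_sub_apply_sub_of_apply_eq_self {Z : Type*} [TopologicalSpace Z]
    [AddCommGroup Z] [Module ℝ Z] [ContinuousConstSMul ℝ Z] {S : Set ℝ}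
    {P : (ℝ → Z) → ℝ → Z}
    (hadd : ∀ f g : ℝ → Z, ContinuousOn f S → ContinuousOn g S →
      ∀ t ∈ S, P (f + g) t = P f t + P g t)
    (hsmul : ∀ (c : ℝ) (f : ℝ → Z), ContinuousOn f S → ∀ t ∈ S, P (c • f) t = c • P f t)
    {v p : ℝ → Z} (hv : ContinuousOn v S) (hp : ContinuousOn p S) (hPp : ∀ t ∈ S, P p t = p t) :
    ∀ t ∈ S, v t - P v t = (v - p) t - P (v - p) t := fun t ht => by
  rw [sub_eq_add_neg v p, ← neg_one_smul ℝ p, hadd _ _ hv (hp.const_smul _) t ht,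
    hsmul _ _ hp t ht, hPp t ht]
  simp only [Pi.add_apply, Pi.neg_apply, neg_one_smul]
  abel

theorem generic_projector_estimate_general (q s : ℕ) (hs1 : 1 ≤ s) (hs2 : s ≤ q + 1)
    (C_P : ℝ) (hCP : 0 < C_P)
    (Z : Type*) [NormedAddCommGroup Z] [NormedSpace ℝ Z] :
    ∃ C : ℝ, 0 < C ∧
      ∀ (a b τ : ℝ), a < b → τ = b - a →
        ∀ r : ℝ≥0∞, 1 ≤ r →
          ∀ P : (ℝ → Z) → (ℝ → Z),
            (∀ f g : ℝ → Z, ContinuousOn f (Icc a b) → ContinuousOn g (Icc a b) →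
              ∀ t ∈ Icc a b, P (f + g) t = P f t + P g t) →
            (∀ (c : ℝ) (f : ℝ → Z), ContinuousOn f (Icc a b) →
              ∀ t ∈ Icc a b, P (c • f) t = c • P f t) →
            (∀ f : ℝ → Z, ContinuousOn f (Icc a b) →
              ∃ pf : ℝ → Z, IsPolyDegLE Z q pf ∧ ∀ t ∈ Icc a b, P f t = pf t) →
            (∀ pf : ℝ → Z, IsPolyDegLE Z q pf → ∀ t ∈ Icc a b, P pf t = pf t) →
            (∀ g : ℝ → Z, ContinuousOn g (Icc a b) →
              eLpNorm (P g) ⊤ (volume.restrict (Ioo a b)) ≤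
                ENNReal.ofReal C_P * eLpNorm g ⊤ (volume.restrict (Ioo a b))) →
            ∀ v : ℝ → Z, ContDiffOn ℝ s v (Icc a b) →
              eLpNorm (fun u => v u - P v u) r (volume.restrict (Ioo a b)) ≤
                ENNReal.ofReal (C * τ ^ s) *
                  eLpNorm (iteratedDerivWithin s v (Icc a b)) r (volume.restrict (Ioo a b)) := by
  refine ⟨1 + C_P, by linarith, ?_⟩
  obtain ⟨n, rfl⟩ : ∃ n, s = n + 1 := ⟨s - 1, by omega⟩
  intro a b τ hab hτ r hr P hadd hsmul _ hproj hstab v hv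
  rw [restrict_Ioo_eq_restrict_Icc] at hstab ⊢
  set μ := volume.restrict (Icc a b)
  set D := iteratedDerivWithin (n + 1) v (Icc a b)
  have hv' : ContDiffOn ℝ (n + 1) v (Icc a b) := by exact_mod_cast hv
  set p := taylorWithinEval v n (Icc a b) a
  have hp : IsPolyDegLE Z q p := isPolyDegLE_taylorWithinEval (by omega) v _ a
  have hreduce := sub_apply_eq_sub_apply_sub_of_apply_eq_self hadd hsmul hv.continuousOn
    hp.continuous_s4.continuousOn (hproj p hp)
  have htaylor : ∀ᵐ x ∂μ, ‖(v - p) x‖ₑ ≤ ENNReal.ofReal (τ ^ n / n !) * eLpNorm D 1 μ := by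
    filter_upwards [ae_restrict_mem measurableSet_Icc] with x hx
    rw [hτ, eLpNorm_one_eq_lintegral_enorm]
    exact enorm_sub_taylorWithinEval_le hab hv' hx
  have herror : ∀ᵐ x ∂μ, ‖v x - P v x‖ₑ ≤
      (1 + ENNReal.ofReal C_P) * ENNReal.ofReal (τ ^ n / n !) * eLpNorm D 1 μ := by
    filter_upwards [ae_enorm_sub_le_of_eLpNorm_top_le htaylor
      (hstab _ (hv.continuousOn.sub hp.continuous_s4.continuousOn)),
      ae_restrict_mem measurableSet_Icc] with x hx hxI
    rwa [← hreduce x hxI, ← mul_assoc] at hx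
  have hD : AEStronglyMeasurable D μ :=
    (hv'.continuousOn_iteratedDerivWithin le_rfl (uniqueDiffOn_Icc hab)).aestronglyMeasurable
      measurableSet_Icc
  have hμ : μ univ = ENNReal.ofReal τ := by
    rw [Measure.restrict_apply_univ, Real.volume_Icc, hτ]
  calc eLpNorm (fun u => v u - P v u) r μ
      ≤ (1 + ENNReal.ofReal C_P) * ENNReal.ofReal (τ ^ n / n !) * μ univ * eLpNorm D r μ :=
        eLpNorm_le_mul_measure_univ_mul_of_ae_enorm_le hr hD herror
    _ ≤ ENNReal.ofReal ((1 + C_P) * τ ^ (n + 1)) * eLpNorm D r μ := by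
        rw [hμ]
        gcongr
        exact one_add_ofReal_mul_ofReal_div_factorial_mul_le hCP.le (by linarith) n

/-- **Estimate for a generic projector.** Any linear projection `P` onto polynomials of degree
at most `q` in time that reproduces such polynomials on `[a,b]` and is stable in the
`L^∞((a,b);Z)` norm with constant `C_P` satisfies, for every `s`-times continuously
differentiable `v` and every `r ∈ [1,∞]`,
`‖v − Pv‖_{L^r((a,b);Z)} ≤ C τ^s ‖v^{(s)}‖_{L^r((a,b);Z)}`,
with a constant `C` depending only on `q`, `s`, and `C_P`. -/
theorem generic_projector_estimate (q s : ℕ) (hs1 : 1 ≤ s) (hs2 : s ≤ q + 1)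
    (C_P : ℝ) (hCP : 0 < C_P)
    (Z : Type*) [NormedAddCommGroup Z] [NormedSpace ℝ Z] [CompleteSpace Z] :
    ∃ C : ℝ, 0 < C ∧
      ∀ (a b τ : ℝ), a < b → τ = b - a →
        ∀ r : ℝ≥0∞, 1 ≤ r →
          ∀ P : (ℝ → Z) → (ℝ → Z),
            (∀ f g : ℝ → Z, ContinuousOn f (Icc a b) → ContinuousOn g (Icc a b) →
              ∀ t ∈ Icc a b, P (f + g) t = P f t + P g t) →
            (∀ (c : ℝ) (f : ℝ → Z), ContinuousOn f (Icc a b) →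
              ∀ t ∈ Icc a b, P (c • f) t = c • P f t) →
            (∀ f : ℝ → Z, ContinuousOn f (Icc a b) →
              ∃ pf : ℝ → Z, IsPolyDegLE Z q pf ∧ ∀ t ∈ Icc a b, P f t = pf t) →
            (∀ pf : ℝ → Z, IsPolyDegLE Z q pf → ∀ t ∈ Icc a b, P pf t = pf t) →
            (∀ g : ℝ → Z, ContinuousOn g (Icc a b) →
              eLpNorm (P g) ⊤ (volume.restrict (Ioo a b)) ≤
                ENNReal.ofReal C_P * eLpNorm g ⊤ (volume.restrict (Ioo a b))) →
            ∀ v : ℝ → Z, ContDiffOn ℝ s v (Icc a b) →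
              eLpNorm (fun u => v u - P v u) r (volume.restrict (Ioo a b)) ≤
                ENNReal.ofReal (C * τ ^ s) *
                  eLpNorm (iteratedDerivWithin s v (Icc a b)) r (volume.restrict (Ioo a b)) :=
  generic_projector_estimate_general q s hs1 hs2 C_P hCP Z
end

section
/- Let H be a real Hilbert space with inner product ⟨·,·⟩, let q ≥ 2 be an integer, and let a < b with τ = b − a, λ = 1/(2τ), and φ(t) = 1 − λ(t − a). Let w be an H-valued polynomial of degree at most q − 1 and let g be an H-valued polynomial of degree at most q − 1 such that g(a) = w(a) and ∫_a^b ⟨φ(t) w(t) − g(t), p(t)⟩ dt = 0 for every H-valued polynomial p of degree at most q − 2. Then ∫_a^b ⟨w(t), φ(t) w(t) − g(t)⟩ dt ≤ 0. -/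
/-!
Since `g a = w a`, the error `e = φ w - g` equals `(w - g) - λ (t - a) w`, and `w - g` vanishes
at `a`, so `w - g = (t - a) r` with `r` of degree at most `q - 2`. Hence `e = (t - a) s` with
`s = r - λ w`. Testing the orthogonality of `e` against `r = s + λ w` gives
`λ ∫ ⟪w, e⟫ = -∫ ⟪s, e⟫ = -∫ (t - a) ‖s‖² ≤ 0`, and `λ > 0` since `a < b`.
-/

open MeasureTheory Set RealInnerProductSpace

/-- An `H`-valued polynomial of degree at most `n - 1` (i.e. with `n` coefficients);
for `n = 0` only the zero polynomial qualifies. -/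
def IsPolyDegLT (H : Type*) [AddCommGroup H] [Module ℝ H] (n : ℕ) (f : ℝ → H) : Prop :=
  ∃ c : Fin n → H, ∀ t : ℝ, f t = ∑ i : Fin n, t ^ (i : ℕ) • c i

namespace IsPolyDegLT

section Algebraic

variable {H : Type*} [AddCommGroup H] [Module ℝ H] {n : ℕ} {f g : ℝ → H}

theorem eq_zero (hf : IsPolyDegLT H 0 f) : f = 0 := by
  obtain ⟨c, hc⟩ := hf
  funext t
  simp [hc t]

theorem add (hf : IsPolyDegLT H n f) (hg : IsPolyDegLT H n g) :
    IsPolyDegLT H n (fun t => f t + g t) := by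
  obtain ⟨c, hc⟩ := hf
  obtain ⟨d, hd⟩ := hg
  exact ⟨c + d, fun t => by simp only [hc, hd, Pi.add_apply, smul_add, Finset.sum_add_distrib]⟩

theorem const_smul (k : ℝ) (hf : IsPolyDegLT H n f) : IsPolyDegLT H n (fun t => k • f t) := by
  obtain ⟨c, hc⟩ := hf
  exact ⟨k • c, fun t => by simp only [hc, Finset.smul_sum, Pi.smul_apply, smul_comm k]⟩

theorem sub (hf : IsPolyDegLT H n f) (hg : IsPolyDegLT H n g) :
    IsPolyDegLT H n (fun t => f t - g t) := by
  obtain ⟨c, hc⟩ := hf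
  obtain ⟨d, hd⟩ := hg
  exact ⟨c - d, fun t => by simp only [hc, hd, Pi.sub_apply, smul_sub, Finset.sum_sub_distrib]⟩

theorem zero : IsPolyDegLT H n (0 : ℝ → H) :=
  ⟨0, fun t => by simp⟩

theorem mono_succ (hf : IsPolyDegLT H n f) : IsPolyDegLT H (n + 1) f := by
  obtain ⟨c, hc⟩ := hf
  exact ⟨Fin.snoc c 0, fun t => by simp [Fin.sum_univ_castSucc, hc]⟩

theorem exists_eq_add_smul (hf : IsPolyDegLT H (n + 1) f) :
    ∃ c r, IsPolyDegLT H n r ∧ ∀ t, f t = c + t • r t := by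
  obtain ⟨c, hc⟩ := hf
  refine ⟨c 0, fun t => ∑ i : Fin n, t ^ (i : ℕ) • c i.succ, ⟨fun i => c i.succ, fun _ => rfl⟩,
    fun t => ?_⟩
  simp only [hc, Fin.sum_univ_succ, Finset.smul_sum, smul_smul, Fin.val_zero, pow_zero, one_smul,
    Fin.val_succ, pow_succ']

theorem exists_sub_eq_smul_of_succ (a : ℝ) (hf : IsPolyDegLT H (n + 1) f) :
    ∃ r, IsPolyDegLT H n r ∧ ∀ t, f t - f a = (t - a) • r t := by
  induction n generalizing f with
  | zero =>
    obtain ⟨c, r, hr, hf⟩ := hf.exists_eq_add_smul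
    exact ⟨0, zero, fun t => by simp [hf, hr.eq_zero]⟩
  | succ n ih =>
    obtain ⟨c, r, hr, hf⟩ := hf.exists_eq_add_smul
    obtain ⟨r', hr', hrr'⟩ := ih hr
    refine ⟨fun t => r t + a • r' t, hr.add (hr'.const_smul a).mono_succ, fun t => ?_⟩
    calc f t - f a = (t - a) • r t + a • (r t - r a) := by
          rw [hf, hf]; simp only [sub_smul, smul_sub]; abel
      _ = (t - a) • (r t + a • r' t) := by rw [hrr', smul_comm a, smul_add]

theorem exists_sub_eq_smul (a : ℝ) (hf : IsPolyDegLT H n f) :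
    ∃ r, IsPolyDegLT H (n - 1) r ∧ ∀ t, f t - f a = (t - a) • r t := by
  cases n with
  | zero => exact ⟨0, zero, fun t => by simp [hf.eq_zero]⟩
  | succ n => exact hf.exists_sub_eq_smul_of_succ a

end Algebraic

theorem continuous {H : Type*} [NormedAddCommGroup H] [NormedSpace ℝ H] {n : ℕ} {f : ℝ → H}
    (hf : IsPolyDegLT H n f) : Continuous f := by
  obtain ⟨c, hc⟩ := hf
  rw [funext hc]
  fun_prop

end IsPolyDegLT

theorem integral_inner_sub_smul_self_nonneg {H : Type*} [NormedAddCommGroup H]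
    [InnerProductSpace ℝ H] {a b : ℝ} (hab : a ≤ b) (s : ℝ → H) :
    0 ≤ ∫ t in a..b, ⟪s t, (t - a) • s t⟫ := by
  refine intervalIntegral.integral_nonneg hab fun t ht => ?_
  rw [real_inner_smul_right]
  exact mul_nonneg (sub_nonneg.2 ht.1) real_inner_self_nonneg

theorem bound_left_thomee_varphi_general (H : Type*) [NormedAddCommGroup H] [InnerProductSpace ℝ H]
    (q : ℕ) (a b τ lam : ℝ) (hab : a < b) (hτ : τ = b - a)
    (hlam : lam = 1 / (2 * τ)) (φ : ℝ → ℝ) (hφ : ∀ t, φ t = 1 - lam * (t - a))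
    (w g : ℝ → H) (hw : IsPolyDegLT H q w) (hg : IsPolyDegLT H q g)
    (hga : g a = w a)
    (horth : ∀ p : ℝ → H, IsPolyDegLT H (q - 1) p →
      (∫ t in a..b, ⟪φ t • w t - g t, p t⟫) = 0) :
    (∫ t in a..b, ⟪w t, φ t • w t - g t⟫) ≤ 0 := by
  have hlam_pos : 0 < lam := by
    rw [hlam, hτ]
    exact one_div_pos.2 (by linarith)
  obtain ⟨r, hr, hwg⟩ := (hw.sub hg).exists_sub_eq_smul a
  set s : ℝ → H := fun t => r t - lam • w t
  have he : ∀ t, φ t • w t - g t = (t - a) • s t := by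
    intro t
    have hwg_t := hwg t
    simp only [hga, sub_self, sub_zero] at hwg_t
    rw [hφ, sub_smul, one_smul, sub_right_comm, hwg_t, smul_sub, smul_smul, mul_comm]
  simp_rw [he] at horth ⊢
  have hsplit : lam * ∫ t in a..b, ⟪w t, (t - a) • s t⟫
      = (∫ t in a..b, ⟪r t, (t - a) • s t⟫) - ∫ t in a..b, ⟪s t, (t - a) • s t⟫ := by
    have := hr.continuous
    have := hw.continuous
    rw [← intervalIntegral.integral_const_mul, ← intervalIntegral.integral_sub
      (Continuous.intervalIntegrable (by fun_prop) a b)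
      (Continuous.intervalIntegrable (by fun_prop) a b)]
    congr 1 with t
    simp only [s, inner_sub_left, real_inner_smul_left, sub_sub_cancel]
  have hr_orth : ∫ t in a..b, ⟪r t, (t - a) • s t⟫ = 0 := by
    simpa only [real_inner_comm] using horth r hr
  refine nonpos_of_mul_nonpos_right ?_ hlam_pos
  rw [hsplit, hr_orth, zero_sub, neg_nonpos]
  exact integral_inner_sub_smul_self_nonneg hab.le s

/-- **Bound involving the left-sided Thomée projection of degree `q − 1`.**
Let `q ≥ 2`, `φ(t) = 1 − λ(t − a)` with `λ = 1/(2τ)`, let `w` be a polynomial of degree at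
most `q − 1`, and let `g` (degree at most `q − 1`) be the left-sided Thomée projection of
`φ w`, i.e. `g(a) = w(a)` and `φ w − g` is `L²`-orthogonal to polynomials of degree at most
`q − 2`. Then `∫_a^b ⟨w(t), φ(t) w(t) − g(t)⟩ dt ≤ 0`. -/
theorem bound_left_thomee_varphi (H : Type*) [NormedAddCommGroup H] [InnerProductSpace ℝ H]
    [CompleteSpace H] (q : ℕ) (hq : 2 ≤ q) (a b τ lam : ℝ) (hab : a < b) (hτ : τ = b - a)
    (hlam : lam = 1 / (2 * τ)) (φ : ℝ → ℝ) (hφ : ∀ t, φ t = 1 - lam * (t - a))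
    (w g : ℝ → H) (hw : IsPolyDegLT H q w) (hg : IsPolyDegLT H q g)
    (hga : g a = w a)
    (horth : ∀ p : ℝ → H, IsPolyDegLT H (q - 1) p →
      (∫ t in a..b, ⟪φ t • w t - g t, p t⟫) = 0) :
    (∫ t in a..b, ⟪w t, φ t • w t - g t⟫) ≤ 0 :=
  bound_left_thomee_varphi_general H q a b τ lam hab hτ hlam φ hφ w g hw hg hga horth
end

section
/- Let q ≥ 1 be an integer and let a < b. Let L_{q−1} and L_q be real polynomials of degrees exactly q − 1 and q, respectively, satisfying L_{q−1}(a) = (−1)^{q−1}, L_q(a) = (−1)^q, ∫_a^b L_{q−1}(t) m(t) dt = 0name for every real polynomial m of degree at most q − 2, and ∫_a^b L_q(t) m(t) dt = 0 for every real polynomial m of degree at most q − 1. If g is a real polynomial of degree at most q − 1 with g(a) = L_q(a) and ∫_a^b (L_q(t) − g(t)) m(t) dt = 0 for every real polynomial m of degree at most q − 2, then g = −L_{q−1}. -/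
/-!
`H = g + L_{q−1}` has degree `< q`, vanishes at `a` because `L_q(a) = −L_{q−1}(a)`, and is
orthogonal to all polynomials of degree `≤ q − 2`, being `L_{q−1} + L_q − (L_q − g)`.
Writing `H = (t − a) P` with `deg P ≤ q − 2` and testing against `P` gives
`∫_a^b (t − a) P(t)² dt = 0`, so `P = 0` and `g = −L_{q−1}`.
-/

open MeasureTheory Set

/-- A real polynomial of degree at most `n - 1` (i.e. with `n` coefficients);
for `n = 0` only the zero polynomial qualifies. -/
def RealPolyDegLT (n : ℕ) (f : ℝ → ℝ) : Prop :=
  ∃ c : Fin n → ℝ, ∀ t : ℝ, f t = ∑ i : Fin n, c i * t ^ (i : ℕ)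

/-- A real polynomial of degree exactly `n`: `n + 1` coefficients with a nonzero
leading coefficient. -/
def RealPolyDegEq (n : ℕ) (f : ℝ → ℝ) : Prop :=
  ∃ c : Fin (n + 1) → ℝ, c (Fin.last n) ≠ 0 ∧ ∀ t : ℝ, f t = ∑ i : Fin (n + 1), c i * t ^ (i : ℕ)

open Polynomial

theorem realPolyDegLT_iff {n : ℕ} {f : ℝ → ℝ} :
    RealPolyDegLT n f ↔ ∃ P ∈ degreeLT ℝ n, f = fun t => P.eval t := by
  constructor
  · rintro ⟨c, hc⟩
    set P := (degreeLTEquiv ℝ n).symm c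
    refine ⟨P, P.2, funext fun t => ?_⟩
    rw [hc, eval_eq_sum_degreeLTEquiv P.2]
    simp [P]
  · rintro ⟨P, hP, rfl⟩
    exact ⟨degreeLTEquiv ℝ n ⟨P, hP⟩, eval_eq_sum_degreeLTEquiv hP⟩

theorem RealPolyDegEq.realPolyDegLT_succ {n : ℕ} {f : ℝ → ℝ} (h : RealPolyDegEq n f) :
    RealPolyDegLT (n + 1) f :=
  let ⟨c, _, hc⟩ := h
  ⟨c, hc⟩

theorem integral_sub_mul_eval_sq_pos {a b : ℝ} (hab : a < b) {P : ℝ[X]} (hP : P ≠ 0) :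
    0 < ∫ t in a..b, (t - a) * P.eval t ^ 2 := by
  obtain ⟨c, hc, hPc⟩ := ((Ioo_infinite hab).sdiff (finite_setOfPred_isRoot hP)).nonempty
  refine intervalIntegral.integral_pos hab (by fun_prop) (fun t ht => ?_)
    ⟨c, Ioo_subset_Icc_self hc, ?_⟩
  · exact mul_nonneg (sub_nonneg.2 ht.1.le) (sq_nonneg _)
  · exact mul_pos (sub_pos.2 hc.1) (sq_pos_of_ne_zero hPc)

theorem eq_zero_of_eval_eq_zero_of_integral_mul_eq_zero {a b : ℝ} (hab : a < b) {n : ℕ}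
    {H : ℝ[X]} (hH : H ∈ degreeLT ℝ (n + 1)) (ha : H.eval a = 0)
    (horth : ∀ P ∈ degreeLT ℝ n, ∫ t in a..b, H.eval t * P.eval t = 0) : H = 0 := by
  obtain ⟨P, rfl⟩ := dvd_iff_isRoot.2 ha
  suffices hP : P = 0 by rw [hP, mul_zero]
  by_contra hP
  have hXP : (X - C a) * P ≠ 0 := mul_ne_zero (X_sub_C_ne_zero a) hP
  have hdeg : P ∈ degreeLT ℝ n := by
    rw [mem_degreeLT, ← natDegree_lt_iff_degree_lt hP]
    rw [mem_degreeLT, ← natDegree_lt_iff_degree_lt hXP,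
      natDegree_mul (X_sub_C_ne_zero a) hP, natDegree_X_sub_C] at hH
    omega
  refine (integral_sub_mul_eval_sq_pos hab hP).ne' ?_
  simpa [sq, mul_assoc] using horth P hdeg

/-- **The left-sided Thomée projection of degree `q − 1` maps `L_q` to `−L_{q−1}`.**
Here `L_{q−1}` and `L_q` are the Legendre polynomials rescaled to `(a,b)`, characterized by
their degrees, their left-endpoint values `(−1)^{q−1}` and `(−1)^q`, and their
`L²((a,b))`-orthogonality to all polynomials of strictly lower degree. If `g` has degree at
most `q − 1`, `g(a) = L_q(a)`, and `L_q − g` is `L²`-orthogonal to polynomials of degree at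
most `q − 2`, then `g = −L_{q−1}`. -/
theorem left_thomee_legendre (q : ℕ) (hq : 1 ≤ q) (a b : ℝ) (hab : a < b)
    (Lqm1 Lq g : ℝ → ℝ)
    (hLqm1deg : RealPolyDegEq (q - 1) Lqm1) (hLqdeg : RealPolyDegEq q Lq)
    (hLqm1a : Lqm1 a = (-1 : ℝ) ^ (q - 1)) (hLqa : Lq a = (-1 : ℝ) ^ q)
    (hLqm1orth : ∀ m : ℝ → ℝ, RealPolyDegLT (q - 1) m → (∫ t in a..b, Lqm1 t * m t) = 0)
    (hLqorth : ∀ m : ℝ → ℝ, RealPolyDegLT q m → (∫ t in a..b, Lq t * m t) = 0)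
    (hgdeg : RealPolyDegLT q g) (hga : g a = Lq a)
    (hgorth : ∀ m : ℝ → ℝ, RealPolyDegLT (q - 1) m →
      (∫ t in a..b, (Lq t - g t) * m t) = 0) :
    ∀ t : ℝ, g t = -Lqm1 t := by
  obtain ⟨n, rfl⟩ := Nat.exists_eq_add_of_le' hq
  simp only [Nat.add_sub_cancel] at hLqm1deg hLqm1a hLqm1orth hgorth
  obtain ⟨G, hG, rfl⟩ := realPolyDegLT_iff.1 hgdeg
  obtain ⟨M, hM, rfl⟩ := realPolyDegLT_iff.1 hLqm1deg.realPolyDegLT_succ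
  obtain ⟨L, -, rfl⟩ := realPolyDegLT_iff.1 hLqdeg.realPolyDegLT_succ
  beta_reduce at hLqm1a hLqa hga
  have horth : ∀ P ∈ degreeLT ℝ n, ∫ t in a..b, (G + M).eval t * P.eval t = 0 := by
    intro P hP
    have hPn := realPolyDegLT_iff.2 ⟨P, hP, rfl⟩
    have hPq := realPolyDegLT_iff.2 ⟨P, degreeLT_mono n.le_succ hP, rfl⟩
    have hint (Q : ℝ[X]) : IntervalIntegrable (fun t => Q.eval t * P.eval t) volume a b :=
      (by fun_prop : Continuous _).intervalIntegrable a b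
    have hsplit : (fun t => (G + M).eval t * P.eval t) = fun t =>
        M.eval t * P.eval t + L.eval t * P.eval t - (L - G).eval t * P.eval t := by
      ext t; simp only [eval_add, eval_sub]; ring
    rw [hsplit, intervalIntegral.integral_sub ((hint M).add (hint L)) (hint _),
      intervalIntegral.integral_add (hint M) (hint L), hLqm1orth _ hPn, hLqorth _ hPq]
    simpa using hgorth _ hPn
  have hGM : G + M = 0 := by
    refine eq_zero_of_eval_eq_zero_of_integral_mul_eq_zero hab (add_mem hG hM) ?_ horth
    rw [eval_add, hga, hLqa, hLqm1a, pow_succ]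
    ring
  intro t
  simp only [eq_neg_of_add_eq_zero_left hGM, eval_neg]
end
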